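/- Loss recursion identity: for every t ∈ ℕ with t > t₀ there exists a constant K(t) ∈ R, independent of θ, such that for all θ ∈ R^p, L_{1:t}(θ) − L̃_t(θ) = Σ_{s=t₀+1}^{t} (ℓ_s(θ) − ℓ̃_s(θ)) + L_{1:t₀}(θ) − ½‖Ω_{t₀}^{1/2}(θ − θ_{t₀})‖₂² + K(t). -/

import Mathlib

open Matrix MeasureTheory Real
open scoped RealInnerProductSpace BigOperators

noncomputable section

/-- Vectors in `ℝ^p` with the Euclidean (`ℓ²`) norm. -/
abbrev Vec (p : ℕ) := EuclideanSpace ℝ (Fin p)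

/-- Real `p × p` matrices. -/
abbrev Mat (p : ℕ) := Matrix (Fin p) (Fin p) ℝ

/-- A matrix applied to a Euclidean vector. -/
def mApp {p : ℕ} (A : Mat p) (v : Vec p) : Vec p := Matrix.toEuclideanLin A v

/-- The quadratic form `vᵀ A v`.  For positive semidefinite `A` this equals
`‖A^{1/2} v‖₂²`. -/
def quadForm {p : ℕ} (A : Mat p) (v : Vec p) : ℝ := ⟪v, mApp A v⟫

/-- The quadratic approximation
`ℓ̃_s(θ) = ℓ_s(θ_{s−1}) + ⟨g_s, θ − θ_{s−1}⟩ + ½(θ − θ_{s−1})ᵀ H_s (θ − θ_{s−1})`. -/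
def qapprox {p : ℕ} (ℓ : ℕ → Vec p → ℝ) (grad : ℕ → Vec p → Vec p)
    (hess : ℕ → Vec p → Mat p) (θ : ℕ → Vec p) (s : ℕ) (y : Vec p) : ℝ :=
  ℓ s (θ (s - 1)) + ⟪grad s (θ (s - 1)), y - θ (s - 1)⟫
    + (1 / 2) * quadForm (hess s (θ (s - 1))) (y - θ (s - 1))

lemma mApp_add {p : ℕ} (A B : Mat p) (v : Vec p) : mApp (A + B) v = mApp A v + mApp B v := by
  simp [mApp, map_add]

lemma mApp_mul {p : ℕ} (A B : Mat p) (v : Vec p) : mApp (A * B) v = mApp A (mApp B v) := by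
  simp [mApp, Matrix.toEuclideanLin_apply, Matrix.mulVec_mulVec]

lemma mApp_one {p : ℕ} (v : Vec p) : mApp 1 v = v := by
  simp [mApp, Matrix.toEuclideanLin_apply]

lemma inner_mApp_symm {p : ℕ} {A : Mat p} (hA : A.IsHermitian) (x y : Vec p) :
    ⟪mApp A x, y⟫ = ⟪x, mApp A y⟫ :=
  (Matrix.isHermitian_iff_isSymmetric.mp hA) x y

lemma quadForm_add_matrix {p : ℕ} (A B : Mat p) (v : Vec p) :
    quadForm (A + B) v = quadForm A v + quadForm B v := by
  simp [quadForm, mApp_add, inner_add_right]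

lemma quadForm_add_vec {p : ℕ} {A : Mat p} (hA : A.IsHermitian) (u c : Vec p) :
    quadForm A (u + c) = quadForm A u + 2 * ⟪u, mApp A c⟫ + quadForm A c := by
  simp only [quadForm, mApp, map_add, inner_add_left, inner_add_right]
  have := inner_mApp_symm hA c u
  simp only [mApp] at this
  rw [← this, real_inner_comm ((Matrix.toEuclideanLin A) c) u]
  ring

/-- loss recursion identity.  For each `t > t₀` there is a
constant `Kc` (independent of `θ`) with
`L_{1:t}(θ) − L̃_t(θ) = Σ_{s=t₀+1}^{t}(ℓ_s(θ) − ℓ̃_s(θ)) + L_{1:t₀}(θ)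
  − ½‖Ω_{t₀}^{1/2}(θ − θ_{t₀})‖₂² + Kc`. -/
theorem stmt5 {p : ℕ} (ℓ : ℕ → Vec p → ℝ)
    (grad : ℕ → Vec p → Vec p) (hess : ℕ → Vec p → Mat p)
    (hgrad : ∀ t y, HasGradientAt (ℓ t) (grad t y) y)
    (hhess : ∀ t y, HasFDerivAt (grad t)
      (LinearMap.toContinuousLinearMap (Matrix.toEuclideanLin (hess t y))) y)
    (t₀ : ℕ) (θ : ℕ → Vec p) (Ω : ℕ → Mat p)
    (hΩt₀ : (Ω t₀).PosDef)
    (hΩrec : ∀ t, t₀ < t → Ω t = Ω (t - 1) + hess t (θ (t - 1)))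
    (hθrec : ∀ t, t₀ < t → θ t = θ (t - 1) - mApp (Ω t)⁻¹ (grad t (θ (t - 1))))
    (hPSD : ∀ t, t₀ < t → (hess t (θ (t - 1))).PosSemidef) :
    ∀ t, t₀ < t → ∃ Kc : ℝ, ∀ y : Vec p,
      (∑ s ∈ Finset.Icc 1 t, ℓ s y)
          - (qapprox ℓ grad hess θ t y
              + (1 / 2) * quadForm (Ω (t - 1)) (y - θ (t - 1)))
        = (∑ s ∈ Finset.Icc (t₀ + 1) t, (ℓ s y - qapprox ℓ grad hess θ s y))
            + (∑ s ∈ Finset.Icc 1 t₀, ℓ s y)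
            - (1 / 2) * quadForm (Ω t₀) (y - θ t₀)
            + Kc := by
  -- positive definiteness of all Ω t, t ≥ t₀
  have hΩpd : ∀ t, t₀ ≤ t → (Ω t).PosDef := by
    intro t ht
    induction t, ht using Nat.le_induction with
    | base => exact hΩt₀
    | succ n hn ih =>
      rw [hΩrec (n + 1) (by omega)]
      simpa using ih.add_posSemidef (by simpa using hPSD (n + 1) (by omega))
  -- completing the square step
  have key : ∀ t, t₀ < t → ∃ C : ℝ, ∀ y : Vec p,
      qapprox ℓ grad hess θ t y + (1 / 2) * quadForm (Ω (t - 1)) (y - θ (t - 1))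
        = (1 / 2) * quadForm (Ω t) (y - θ t) + C := by
    intro t ht
    have hpd : (Ω t).PosDef := hΩpd t ht.le
    have hsym : (Ω t).IsHermitian := hpd.isHermitian
    set g := grad t (θ (t - 1)) with hg
    have hinv : mApp (Ω t) (mApp (Ω t)⁻¹ g) = g := by
      rw [← mApp_mul, Matrix.mul_nonsing_inv _ hpd.det_pos.ne'.isUnit, mApp_one]
    refine ⟨ℓ t (θ (t - 1)) - (1 / 2) * quadForm (Ω t) (mApp (Ω t)⁻¹ g), fun y => ?_⟩
    have hdecomp : y - θ t = (y - θ (t - 1)) + mApp (Ω t)⁻¹ g := by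
      rw [hθrec t ht]; abel
    rw [hdecomp, quadForm_add_vec hsym, hinv]
    have hΩ : quadForm (Ω t) (y - θ (t - 1))
        = quadForm (Ω (t - 1)) (y - θ (t - 1))
          + quadForm (hess t (θ (t - 1))) (y - θ (t - 1)) := by
      rw [hΩrec t ht, quadForm_add_matrix]
    rw [hΩ]
    unfold qapprox
    rw [real_inner_comm g (y - θ (t - 1))]
    ring
  -- main constancy by induction
  have main : ∀ t, t₀ ≤ t → ∃ K : ℝ, ∀ y : Vec p,
      (∑ s ∈ Finset.Icc (t₀ + 1) t, qapprox ℓ grad hess θ s y)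
        + (1 / 2) * quadForm (Ω t₀) (y - θ t₀)
        = (1 / 2) * quadForm (Ω t) (y - θ t) + K := by
    intro t ht
    induction t, ht using Nat.le_induction with
    | base =>
      refine ⟨0, fun y => ?_⟩
      rw [Finset.Icc_eq_empty (by omega)]
      simp
    | succ n hn ih =>
      obtain ⟨K, hK⟩ := ih
      obtain ⟨C, hC⟩ := key (n + 1) (by omega)
      refine ⟨K + C, fun y => ?_⟩
      rw [Finset.sum_Icc_succ_top (by omega)]
      have h1 := hK y
      have h2 := hC y
      simp only [Nat.add_sub_cancel] at h2
      linarith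
  -- conclude
  intro t ht
  obtain ⟨n, rfl⟩ : ∃ n, t = n + 1 := ⟨t - 1, by omega⟩
  obtain ⟨K, hK⟩ := main n (by omega)
  refine ⟨K, fun y => ?_⟩
  have hsplit : (∑ s ∈ Finset.Icc 1 (n + 1), ℓ s y)
      = (∑ s ∈ Finset.Icc 1 t₀, ℓ s y) + ∑ s ∈ Finset.Icc (t₀ + 1) (n + 1), ℓ s y := by
    rw [show (1 : ℕ) = 0 + 1 from rfl, Finset.Icc_add_one_left_eq_Ioc, Finset.Icc_add_one_left_eq_Ioc,
      show t₀ + (0 + 1) = t₀ + 1 from rfl, Finset.Icc_add_one_left_eq_Ioc]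
    exact (Finset.sum_Ioc_consecutive _ (by omega) (by omega)).symm
  have hsub : (∑ s ∈ Finset.Icc (t₀ + 1) (n + 1), (ℓ s y - qapprox ℓ grad hess θ s y))
      = (∑ s ∈ Finset.Icc (t₀ + 1) (n + 1), ℓ s y)
        - ∑ s ∈ Finset.Icc (t₀ + 1) (n + 1), qapprox ℓ grad hess θ s y :=
    Finset.sum_sub_distrib _ _
  have htop : (∑ s ∈ Finset.Icc (t₀ + 1) (n + 1), qapprox ℓ grad hess θ s y)
      = (∑ s ∈ Finset.Icc (t₀ + 1) n, qapprox ℓ grad hess θ s y)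
        + qapprox ℓ grad hess θ (n + 1) y :=
    Finset.sum_Icc_succ_top (by omega) _
  have h1 := hK y
  simp only [Nat.add_sub_cancel]
  linarith
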